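/- arXiv:2312.15762 — 5 statements merged into one kernel-verified Lean document; each statement's English description precedes it below -/
import Mathlib

section
/- For any three points a, b, c in a metric space, any real z ≥ 1, and any 0 < s ≤ 1, we have |dist(a,c)^z − dist(b,c)^z| ≤ s · dist(a,c)^z + (3z/s)^{z-1} · dist(a,b)^z. -/
/-! Convexity of `x ↦ x ^ z`, applied to `m + d = (1 - t) • (m / (1 - t)) + t • (d / t)`, gives
`(m + d) ^ z ≤ (1 - t) ^ (1 - z) * m ^ z + t ^ (1 - z) * d ^ z`. For `t = s / (3 z)` the second
weight is exactly `(3 z / s) ^ (z - 1)`, and Bernoulli's inequality bounds the first by `1 + s`.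
Combined with the triangle inequality this bounds each of `dist a c ^ z`, `dist b c ^ z` by the
other. -/

namespace Real

theorem add_rpow_le_rpow_mul_rpow_add_rpow_mul_rpow {x y a b p : ℝ} (hx : 0 ≤ x) (hy : 0 ≤ y)
    (ha : 0 < a) (hb : 0 < b) (hab : a + b = 1) (hp : 1 ≤ p) :
    (x + y) ^ p ≤ a ^ (1 - p) * x ^ p + b ^ (1 - p) * y ^ p := by
  have weight_mul_div_rpow : ∀ {w u : ℝ}, 0 < w → 0 ≤ u → w * (u / w) ^ p = w ^ (1 - p) * u ^ p :=
    fun {w u} hw hu => by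
      rw [div_rpow hu hw.le, rpow_sub hw, rpow_one]
      field_simp
  have hsplit : x + y = a • (x / a) + b • (y / b) := by
    simp only [smul_eq_mul]
    field_simp
  calc (x + y) ^ p = (a • (x / a) + b • (y / b)) ^ p := by rw [← hsplit]
    _ ≤ a • (x / a) ^ p + b • (y / b) ^ p :=
      (convexOn_rpow hp).2 (div_nonneg hx ha.le) (div_nonneg hy hb.le) ha.le hb.le hab
    _ = a ^ (1 - p) * x ^ p + b ^ (1 - p) * y ^ p := by
      simp only [smul_eq_mul, weight_mul_div_rpow ha hx, weight_mul_div_rpow hb hy]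

theorem one_sub_div_rpow_one_sub_le {s z : ℝ} (hs0 : 0 ≤ s) (hs2 : s ≤ 2) (hz : 1 ≤ z) :
    (1 - s / (3 * z)) ^ (1 - z) ≤ 1 + s := by
  set t := s / (3 * z)
  have hzt : z * t = s / 3 := by simp only [t]; field_simp
  have ht0 : 0 ≤ t := by positivity
  have ht1 : t ≤ s / 3 := by nlinarith
  have hpos : 0 < 1 - t := by linarith
  -- Bernoulli, after raising the exponent from `z - 1` to `z`
  have hlower : 1 - s / 3 ≤ (1 - t) ^ (z - 1) :=
    calc 1 - s / 3 = 1 + z * -t := by rw [mul_neg, hzt]; ring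
      _ ≤ (1 + -t) ^ z := one_add_mul_self_le_rpow_one_add (by linarith) hz
      _ ≤ (1 - t) ^ (z - 1) := by
        rw [← sub_eq_add_neg]
        exact rpow_le_rpow_of_exponent_ge hpos (by linarith) (by linarith)
  calc (1 - t) ^ (1 - z) = ((1 - t) ^ (z - 1))⁻¹ := by
        rw [← rpow_neg hpos.le, neg_sub]
    _ ≤ (1 - s / 3)⁻¹ := inv_anti₀ (by linarith) hlower
    _ ≤ 1 + s := by
        rw [inv_le_iff_one_le_mul₀' (by linarith)]
        nlinarith

theorem add_rpow_le_one_add_mul_rpow_add {m d z s : ℝ} (hm : 0 ≤ m) (hd : 0 ≤ d) (hz : 1 ≤ z)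
    (hs0 : 0 < s) (hs2 : s ≤ 2) :
    (m + d) ^ z ≤ (1 + s) * m ^ z + (3 * z / s) ^ (z - 1) * d ^ z := by
  have ht0 : 0 < s / (3 * z) := by positivity
  have ht1 : s / (3 * z) < 1 := by
    rw [div_lt_one (by positivity)]
    linarith
  have hweight : (s / (3 * z)) ^ (1 - z) = (3 * z / s) ^ (z - 1) := by
    have : 0 ≤ 3 * z / s := by positivity
    rw [← inv_div, inv_rpow this, ← rpow_neg this, neg_sub]
  calc (m + d) ^ z
      ≤ (1 - s / (3 * z)) ^ (1 - z) * m ^ z + (s / (3 * z)) ^ (1 - z) * d ^ z :=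
        add_rpow_le_rpow_mul_rpow_add_rpow_mul_rpow hm hd (by linarith) ht0 (by ring) hz
    _ ≤ (1 + s) * m ^ z + (3 * z / s) ^ (z - 1) * d ^ z := by
        rw [hweight]
        gcongr
        exact one_sub_div_rpow_one_sub_le hs0.le hs2 hz

end Real

theorem generalized_triangle_pow_diff
    {X : Type*} [MetricSpace X] (a b c : X) (z s : ℝ)
    (hz : 1 ≤ z) (hs0 : 0 < s) (hs1 : s ≤ 1) :
    |dist a c ^ z - dist b c ^ z| ≤
      s * dist a c ^ z + (3 * z / s) ^ (z - 1) * dist a b ^ z := by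
  have bound : ∀ {x y : X}, dist x c ^ z ≤
      (1 + s) * dist y c ^ z + (3 * z / s) ^ (z - 1) * dist x y ^ z := fun {x y} =>
    calc dist x c ^ z ≤ (dist y c + dist x y) ^ z := by
          gcongr
          linarith [dist_triangle x y c]
      _ ≤ _ := Real.add_rpow_le_one_add_mul_rpow_add dist_nonneg dist_nonneg hz hs0 (by linarith)
  have hcross : 0 ≤ (3 * z / s) ^ (z - 1) * dist a b ^ z := by positivity
  refine abs_sub_le_iff.2 ⟨?_, ?_⟩
  · rcases le_total (dist b c) (dist a c) with hba | hab
    · have : s * dist b c ^ z ≤ s * dist a c ^ z := by gcongr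
      linarith [@bound a b]
    · have : dist a c ^ z ≤ dist b c ^ z := by gcongr
      have : 0 ≤ s * dist a c ^ z := by positivity
      linarith
  · have := @bound b a
    rw [dist_comm b a] at this
    linarith
end

section
/- Let g(a_out, b_out, P) = ⟨P, C⟩ be the objective of the robust Wasserstein distance problem with marginals a, b, outlier masses ζ_μ, ζ_ν ∈ [0,1), constraints a ⪰ a_out, ‖a_out‖₁ = ζ_μ, b ⪰ b_out, ‖b_out‖₁ = ζ_ν, and P ∈ Π((a − a_out)/(1−ζ_μ), (b − b_out)/(1−ζ_ν)). Define the augmented problem with cost matrix C_aug ∈ ℝ₊^{(n+1)×(n+1)} given by (C_aug)_{ij} = C_{ij} for i,j ∈ [n] and 0 otherwise, augmented marginals a_aug = (a/(1−ζ_μ); ζ_ν/(1−ζ_ν)) and b_aug = (b/(1−ζ_ν); ζ_μ/(1−ζ_μ)), and feasible set D_h = {P_aug ∈ Π(a_aug, b_aug) : (P_aug)_{n+1,n+1} = 0} with objective h(P_aug) = ⟨P_aug, C_aug⟩. Then the map φ sending (a_out, b_out, P) to P_aug defined by (P_aug)_{ij} = P_{ij} for i,j∈[n], (P_aug)_{i,n+1}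 = (a_out)_i/(1−ζ_μ), (P_aug)_{n+1,j} = (b_out)_j/(1−ζ_ν), (P_aug)_{n+1,n+1} = 0, is a bijection from the feasible domain of g onto D_h, and h(φ(a_out,b_out,P)) = g(a_out,b_out,P) for all feasible (a_out,b_out,P). -/
open Finset

/-- Feasible domain of the robust Wasserstein distance problem. -/
noncomputable def robustDom (n : ℕ) (a b : Fin n → ℝ) (ζμ ζν : ℝ) :
    Set ((Fin n → ℝ) × (Fin n → ℝ) × Matrix (Fin n) (Fin n) ℝ) :=
  {x | (∀ i, 0 ≤ x.1 i) ∧ (∀ i, x.1 i ≤ a i) ∧ (∑ i, x.1 i) = ζμ ∧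
       (∀ j, 0 ≤ x.2.1 j) ∧ (∀ j, x.2.1 j ≤ b j) ∧ (∑ j, x.2.1 j) = ζν ∧
       (∀ i j, 0 ≤ x.2.2 i j) ∧
       (∀ i, (∑ j, x.2.2 i j) = (a i - x.1 i) / (1 - ζμ)) ∧
       (∀ j, (∑ i, x.2.2 i j) = (b j - x.2.1 j) / (1 - ζν))}

/-- Augmented first marginal. -/
noncomputable def aAug (n : ℕ) (a : Fin n → ℝ) (ζμ ζν : ℝ) : Fin (n + 1) → ℝ :=
  Fin.snoc (fun i => a i / (1 - ζμ)) (ζν / (1 - ζν))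

/-- Augmented second marginal. -/
noncomputable def bAug (n : ℕ) (b : Fin n → ℝ) (ζμ ζν : ℝ) : Fin (n + 1) → ℝ :=
  Fin.snoc (fun j => b j / (1 - ζν)) (ζμ / (1 - ζμ))

/-- Augmented cost matrix: equals `C` on the first `n × n` block and `0` elsewhere. -/
noncomputable def cAug (n : ℕ) (C : Matrix (Fin n) (Fin n) ℝ) :
    Matrix (Fin (n + 1)) (Fin (n + 1)) ℝ :=
  fun i j =>
    if hi : (i : ℕ) < n then
      if hj : (j : ℕ) < n then C ⟨i, hi⟩ ⟨j, hj⟩ else 0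
    else 0

/-- Feasible domain of the augmented OT problem. -/
noncomputable def augDom (n : ℕ) (a b : Fin n → ℝ) (ζμ ζν : ℝ) :
    Set (Matrix (Fin (n + 1)) (Fin (n + 1)) ℝ) :=
  {P | (∀ i j, 0 ≤ P i j) ∧
       (∀ i, (∑ j, P i j) = aAug n a ζμ ζν i) ∧
       (∀ j, (∑ i, P i j) = bAug n b ζμ ζν j) ∧
       P (Fin.last n) (Fin.last n) = 0}

/-- The map φ from the robust feasible domain to the augmented feasible domain. -/
noncomputable def phiMap (n : ℕ) (ζμ ζν : ℝ)
    (x : (Fin n → ℝ) × (Fin n → ℝ) × Matrix (Fin n) (Fin n) ℝ) :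
    Matrix (Fin (n + 1)) (Fin (n + 1)) ℝ :=
  fun i j =>
    if hi : (i : ℕ) < n then
      if hj : (j : ℕ) < n then x.2.2 ⟨i, hi⟩ ⟨j, hj⟩
      else x.1 ⟨i, hi⟩ / (1 - ζμ)
    else
      if hj : (j : ℕ) < n then x.2.1 ⟨j, hj⟩ / (1 - ζν) else 0

/-!
The map φ keeps `P` as the `n × n` block and stores the rescaled outlier vectors in the last
column and row. Because the corner entry vanishes, the last row and column sums of `P_aug` say
exactly `‖b_out‖₁ = ζν` and `‖a_out‖₁ = ζμ`, while the first `n` row sums say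
`P𝟙 + a_out / (1 - ζμ) = a / (1 - ζμ)`, i.e. the robust marginal constraint; likewise for
columns. Conversely, reading the outlier vectors off the last column and row (times `1 - ζ`)
inverts φ, and nonnegativity of `P_aug` gives `a_out ≤ a`, `b_out ≤ b`. The costs agree since
`C_aug` vanishes outside the `n × n` block.
-/

section Augmentation

variable {n : ℕ} {ζμ ζν : ℝ}

@[simp]
lemma phiMap_castSucc_castSucc (x : (Fin n → ℝ) × (Fin n → ℝ) × Matrix (Fin n) (Fin n) ℝ)
    (i j : Fin n) : phiMap n ζμ ζν x i.castSucc j.castSucc = x.2.2 i j := by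
  simp [phiMap]

@[simp]
lemma phiMap_castSucc_last (x : (Fin n → ℝ) × (Fin n → ℝ) × Matrix (Fin n) (Fin n) ℝ)
    (i : Fin n) : phiMap n ζμ ζν x i.castSucc (Fin.last n) = x.1 i / (1 - ζμ) := by
  simp [phiMap]

@[simp]
lemma phiMap_last_castSucc (x : (Fin n → ℝ) × (Fin n → ℝ) × Matrix (Fin n) (Fin n) ℝ)
    (j : Fin n) : phiMap n ζμ ζν x (Fin.last n) j.castSucc = x.2.1 j / (1 - ζν) := by
  simp [phiMap]

@[simp]
lemma phiMap_last_last (x : (Fin n → ℝ) × (Fin n → ℝ) × Matrix (Fin n) (Fin n) ℝ) :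
    phiMap n ζμ ζν x (Fin.last n) (Fin.last n) = 0 := by
  simp [phiMap]

@[simp]
lemma cAug_castSucc_castSucc (C : Matrix (Fin n) (Fin n) ℝ) (i j : Fin n) :
    cAug n C i.castSucc j.castSucc = C i j := by
  simp [cAug]

@[simp]
lemma cAug_castSucc_last (C : Matrix (Fin n) (Fin n) ℝ) (i : Fin n) :
    cAug n C i.castSucc (Fin.last n) = 0 := by
  simp [cAug]

@[simp]
lemma cAug_last (C : Matrix (Fin n) (Fin n) ℝ) (j : Fin (n + 1)) :
    cAug n C (Fin.last n) j = 0 := by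
  simp [cAug]

@[simp]
lemma aAug_castSucc (a : Fin n → ℝ) (i : Fin n) :
    aAug n a ζμ ζν i.castSucc = a i / (1 - ζμ) := by
  simp [aAug]

@[simp]
lemma aAug_last (a : Fin n → ℝ) : aAug n a ζμ ζν (Fin.last n) = ζν / (1 - ζν) := by
  simp [aAug]

@[simp]
lemma bAug_castSucc (b : Fin n → ℝ) (j : Fin n) :
    bAug n b ζμ ζν j.castSucc = b j / (1 - ζν) := by
  simp [bAug]

@[simp]
lemma bAug_last (b : Fin n → ℝ) : bAug n b ζμ ζν (Fin.last n) = ζμ / (1 - ζμ) := by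
  simp [bAug]

lemma mem_augDom_iff {a b : Fin n → ℝ} {P : Matrix (Fin (n + 1)) (Fin (n + 1)) ℝ} :
    P ∈ augDom n a b ζμ ζν ↔
      (∀ i j, 0 ≤ P i j) ∧
      (∀ i : Fin n, ∑ j : Fin n, P i.castSucc j.castSucc + P i.castSucc (Fin.last n)
        = a i / (1 - ζμ)) ∧
      ∑ j : Fin n, P (Fin.last n) j.castSucc = ζν / (1 - ζν) ∧
      (∀ j : Fin n, ∑ i : Fin n, P i.castSucc j.castSucc + P (Fin.last n) j.castSucc
        = b j / (1 - ζν)) ∧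
      ∑ i : Fin n, P i.castSucc (Fin.last n) = ζμ / (1 - ζμ) ∧
      P (Fin.last n) (Fin.last n) = 0 := by
  have hrows : (∀ i, ∑ j, P i j = aAug n a ζμ ζν i) ↔ (∀ i : Fin n,
      ∑ j : Fin n, P i.castSucc j.castSucc + P i.castSucc (Fin.last n) = a i / (1 - ζμ)) ∧
      ∑ j : Fin n, P (Fin.last n) j.castSucc + P (Fin.last n) (Fin.last n) = ζν / (1 - ζν) := by
    simp only [Fin.forall_fin_succ', Fin.sum_univ_castSucc, aAug_castSucc, aAug_last]
  have hcols : (∀ j, ∑ i, P i j = bAug n b ζμ ζν j) ↔ (∀ j : Fin n,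
      ∑ i : Fin n, P i.castSucc j.castSucc + P (Fin.last n) j.castSucc = b j / (1 - ζν)) ∧
      ∑ i : Fin n, P i.castSucc (Fin.last n) + P (Fin.last n) (Fin.last n) = ζμ / (1 - ζμ) := by
    simp only [Fin.forall_fin_succ', Fin.sum_univ_castSucc, bAug_castSucc, bAug_last]
  simp only [augDom, Set.mem_ofPred_eq, hrows, hcols]
  constructor
  · rintro ⟨hP, ⟨hrow, hrowLast⟩, ⟨hcol, hcolLast⟩, hcorner⟩
    rw [hcorner, add_zero] at hrowLast hcolLast
    exact ⟨hP, hrow, hrowLast, hcol, hcolLast, hcorner⟩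
  · rintro ⟨hP, hrow, hrowLast, hcol, hcolLast, hcorner⟩
    refine ⟨hP, ⟨hrow, ?_⟩, ⟨hcol, ?_⟩, hcorner⟩ <;> rwa [hcorner, add_zero]

lemma phiMap_mem_augDom {a b : Fin n → ℝ}
    {x : (Fin n → ℝ) × (Fin n → ℝ) × Matrix (Fin n) (Fin n) ℝ}
    (hμ : ζμ ≤ 1) (hν : ζν ≤ 1) (hx : x ∈ robustDom n a b ζμ ζν) :
    phiMap n ζμ ζν x ∈ augDom n a b ζμ ζν := by
  obtain ⟨hA0, -, hAsum, hB0, -, hBsum, hP0, hrow, hcol⟩ := hx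
  have hμ' : 0 ≤ 1 - ζμ := by linarith
  have hν' : 0 ≤ 1 - ζν := by linarith
  rw [mem_augDom_iff]
  refine ⟨fun i j => ?_, fun i => ?_, ?_, fun j => ?_, ?_, phiMap_last_last x⟩
  · induction i using Fin.lastCases <;> induction j using Fin.lastCases
    · simp
    · simpa using div_nonneg (hB0 _) hν'
    · simpa using div_nonneg (hA0 _) hμ'
    · simpa using hP0 _ _
  · simp only [phiMap_castSucc_castSucc, phiMap_castSucc_last, hrow, ← add_div, sub_add_cancel]
  · simp only [phiMap_last_castSucc, ← Finset.sum_div, hBsum]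
  · simp only [phiMap_castSucc_castSucc, phiMap_last_castSucc, hcol, ← add_div, sub_add_cancel]
  · simp only [phiMap_castSucc_last, ← Finset.sum_div, hAsum]

lemma phiMap_injective (hμ : ζμ ≠ 1) (hν : ζν ≠ 1) : Function.Injective (phiMap n ζμ ζν) := by
  intro x y h
  have hμ' : 1 - ζμ ≠ 0 := sub_ne_zero.2 hμ.symm
  have hν' : 1 - ζν ≠ 0 := sub_ne_zero.2 hν.symm
  have hA : x.1 = y.1 := funext fun i => by
    simpa [hμ'] using congrFun₂ h i.castSucc (Fin.last n)
  have hB : x.2.1 = y.2.1 := funext fun j => by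
    simpa [hν'] using congrFun₂ h (Fin.last n) j.castSucc
  have hP : x.2.2 = y.2.2 := Matrix.ext fun i j => by
    simpa using congrFun₂ h i.castSucc j.castSucc
  exact Prod.ext hA (Prod.ext hB hP)

variable (n ζμ ζν) in
noncomputable def augToRobust (P : Matrix (Fin (n + 1)) (Fin (n + 1)) ℝ) :
    (Fin n → ℝ) × (Fin n → ℝ) × Matrix (Fin n) (Fin n) ℝ :=
  (fun i => P i.castSucc (Fin.last n) * (1 - ζμ), fun j => P (Fin.last n) j.castSucc * (1 - ζν),
    P.submatrix Fin.castSucc Fin.castSucc)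

lemma phiMap_augToRobust {P : Matrix (Fin (n + 1)) (Fin (n + 1)) ℝ} (hμ : ζμ ≠ 1) (hν : ζν ≠ 1)
    (hcorner : P (Fin.last n) (Fin.last n) = 0) :
    phiMap n ζμ ζν (augToRobust n ζμ ζν P) = P := by
  have hμ' : 1 - ζμ ≠ 0 := sub_ne_zero.2 hμ.symm
  have hν' : 1 - ζν ≠ 0 := sub_ne_zero.2 hν.symm
  ext i j
  induction i using Fin.lastCases <;> induction j using Fin.lastCases <;>
    simp [augToRobust, hcorner, hμ', hν']

lemma augToRobust_mem_robustDom {a b : Fin n → ℝ} {P : Matrix (Fin (n + 1)) (Fin (n + 1)) ℝ}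
    (hμ : ζμ < 1) (hν : ζν < 1) (hP : P ∈ augDom n a b ζμ ζν) :
    augToRobust n ζμ ζν P ∈ robustDom n a b ζμ ζν := by
  obtain ⟨hP0, hrow, hrowLast, hcol, hcolLast, -⟩ := mem_augDom_iff.1 hP
  have hμ' : 0 < 1 - ζμ := by linarith
  have hν' : 0 < 1 - ζν := by linarith
  have hrowSum (i : Fin n) : 0 ≤ ∑ j : Fin n, P i.castSucc j.castSucc :=
    Finset.sum_nonneg fun j _ => hP0 _ _
  have hcolSum (j : Fin n) : 0 ≤ ∑ i : Fin n, P i.castSucc j.castSucc :=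
    Finset.sum_nonneg fun i _ => hP0 _ _
  simp only [robustDom, augToRobust, Matrix.submatrix_apply, Set.mem_ofPred_eq]
  refine ⟨fun i => mul_nonneg (hP0 _ _) hμ'.le, fun i => ?_, ?_,
    fun j => mul_nonneg (hP0 _ _) hν'.le, fun j => ?_, ?_, fun i j => hP0 _ _, fun i => ?_,
    fun j => ?_⟩
  · rw [← le_div_iff₀ hμ']
    linarith [hrow i, hrowSum i]
  · rw [← Finset.sum_mul, hcolLast, div_mul_cancel₀ _ hμ'.ne']
  · rw [← le_div_iff₀ hν']
    linarith [hcol j, hcolSum j]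
  · rw [← Finset.sum_mul, hrowLast, div_mul_cancel₀ _ hν'.ne']
  · rw [sub_div, mul_div_cancel_right₀ _ hμ'.ne']
    linarith [hrow i]
  · rw [sub_div, mul_div_cancel_right₀ _ hν'.ne']
    linarith [hcol j]

lemma sum_phiMap_mul_cAug (x : (Fin n → ℝ) × (Fin n → ℝ) × Matrix (Fin n) (Fin n) ℝ)
    (C : Matrix (Fin n) (Fin n) ℝ) :
    ∑ i, ∑ j, phiMap n ζμ ζν x i j * cAug n C i j = ∑ i, ∑ j, x.2.2 i j * C i j := by
  simp [Fin.sum_univ_castSucc]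

end Augmentation

theorem robust_OT_reduction_bijection_general
    (n : ℕ) (a b : Fin n → ℝ) (C : Matrix (Fin n) (Fin n) ℝ) (ζμ ζν : ℝ)
    (hζμ1 : ζμ < 1) (hζν1 : ζν < 1) :
    Set.BijOn (phiMap n ζμ ζν) (robustDom n a b ζμ ζν) (augDom n a b ζμ ζν) ∧
    ∀ x ∈ robustDom n a b ζμ ζν,
      (∑ i, ∑ j, phiMap n ζμ ζν x i j * cAug n C i j)
        = ∑ i, ∑ j, x.2.2 i j * C i j :=
  ⟨⟨fun _ hx => phiMap_mem_augDom hζμ1.le hζν1.le hx, (phiMap_injective hζμ1.ne hζν1.ne).injOn,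
    fun P hP => ⟨augToRobust n ζμ ζν P, augToRobust_mem_robustDom hζμ1 hζν1 hP,
      phiMap_augToRobust hζμ1.ne hζν1.ne hP.2.2.2⟩⟩,
    fun x _ => sum_phiMap_mul_cAug x C⟩

theorem robust_OT_reduction_bijection
    (n : ℕ) (a b : Fin n → ℝ) (C : Matrix (Fin n) (Fin n) ℝ) (ζμ ζν : ℝ)
    (hζμ0 : 0 ≤ ζμ) (hζμ1 : ζμ < 1) (hζν0 : 0 ≤ ζν) (hζν1 : ζν < 1)
    (ha : ∀ i, 0 ≤ a i) (hb : ∀ j, 0 ≤ b j)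
    (ha1 : ∑ i, a i = 1) (hb1 : ∑ j, b j = 1)
    (hC : ∀ i j, 0 ≤ C i j) :
    Set.BijOn (phiMap n ζμ ζν) (robustDom n a b ζμ ζν) (augDom n a b ζμ ζν) ∧
    ∀ x ∈ robustDom n a b ζμ ζν,
      (∑ i, ∑ j, phiMap n ζμ ζν x i j * cAug n C i j)
        = ∑ i, ∑ j, x.2.2 i j * C i j :=
  robust_OT_reduction_bijection_general n a b C ζμ ζν hζμ1 hζν1
end

section
/- In the augmented OT problem with cost C_aug where (C_aug)_{ij} = 0 whenever i = n+1 or j = n+1, dropping the constraint (P_aug)_{n+1,n+1} = 0 does not change the optimal value: min{⟨P_aug, C_aug⟩ : P_aug ∈ Π(a_aug, b_aug)} = min{⟨P_aug, C_aug⟩ : P_aug ∈ Π(a_aug, b_aug), (P_aug)_{n+1,n+1} = 0}. -/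
/-!
Write `ε` for the corner mass `P r c` of a coupling and `S` for the mass of its interior block
(off row `r` and column `c`). Removing the fraction `t = ε / S` of the interior block and sending
its row sums to column `c` and its column sums to row `r` keeps both marginals once the corner is
emptied, because `t * S = ε`. The cost can only drop: the moved mass lands where the cost vanishes,
and the rest is scaled by `1 - t`. This needs `ε ≤ S`, which is the feasibility assumption, since
`S - ε = ∑ a - a r - b c`.
-/

open Finset

theorem sum_ite_eq_zero_else {α M : Type*} [Fintype α] [DecidableEq α] [AddCommGroup M]
    (a : α) (f : α → M) : ∑ x, (if x = a then 0 else f x) = ∑ x, f x - f a := by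
  simp [sum_ite, filter_ne', sum_erase_eq_sub]

theorem csInf_image_eq_of_forall_exists_le {α β : Type*} [ConditionallyCompleteLattice β]
    {f : α → β} {s t : Set α} (hts : t ⊆ s) (hs : BddBelow (f '' s))
    (h : ∀ x ∈ s, ∃ y ∈ t, f y ≤ f x) : sInf (f '' s) = sInf (f '' t) := by
  rcases t.eq_empty_or_nonempty with rfl | ht
  · have : s = ∅ := Set.eq_empty_of_forall_notMem fun x hx => by simpa using h x hx
    rw [this]
  refine le_antisymm (csInf_le_csInf hs (ht.image f) (Set.image_mono hts)) ?_
  refine le_csInf ((ht.mono hts).image f) ?_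
  rintro _ ⟨x, hx, rfl⟩
  obtain ⟨y, hy, hyx⟩ := h x hx
  exact (csInf_le (hs.mono (Set.image_mono hts)) (Set.mem_image_of_mem f hy)).trans hyx

section Coupling

variable {ι κ : Type*}

def IsCoupling [Fintype ι] [Fintype κ] (a : ι → ℝ) (b : κ → ℝ) (P : Matrix ι κ ℝ) : Prop :=
  (∀ i j, 0 ≤ P i j) ∧ (∀ i, ∑ j, P i j = a i) ∧ (∀ j, ∑ i, P i j = b j)

variable [DecidableEq ι] [DecidableEq κ] (r : ι) (c : κ) (P : Matrix ι κ ℝ)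

def interiorBlock : Matrix ι κ ℝ := fun i j => if i = r ∨ j = c then 0 else P i j

@[simp]
theorem interiorBlock_self_left (j : κ) : interiorBlock r c P r j = 0 := by
  simp [interiorBlock]

@[simp]
theorem interiorBlock_self_right (i : ι) : interiorBlock r c P i c = 0 := by
  simp [interiorBlock]

theorem interiorBlock_nonneg (hP : ∀ i j, 0 ≤ P i j) (i : ι) (j : κ) :
    0 ≤ interiorBlock r c P i j := by
  unfold interiorBlock
  split_ifs
  exacts [le_rfl, hP i j]

theorem sum_interiorBlock_row [Fintype κ] (i : ι) :
    ∑ j, interiorBlock r c P i j = if i = r then 0 else ∑ j, P i j - P i c := by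
  by_cases hi : i = r <;> simp [interiorBlock, hi, sum_ite_eq_zero_else]

theorem sum_interiorBlock [Fintype ι] [Fintype κ] {a : ι → ℝ} {b : κ → ℝ}
    (hP : IsCoupling a b P) :
    ∑ i, ∑ j, interiorBlock r c P i j = ∑ i, a i - a r - b c + P r c := by
  simp only [sum_interiorBlock_row, hP.2.1, sum_ite_eq_zero_else, sum_sub_distrib, hP.2.2]
  ring

variable [Fintype ι] [Fintype κ]

def drainCorner (t : ℝ) : Matrix ι κ ℝ := fun i j =>
  P i j - t * interiorBlock r c P i j
    + (if i = r then t * ∑ k, interiorBlock r c P k j else 0)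
    + (if j = c then t * ∑ k, interiorBlock r c P i k else 0)
    - (if i = r ∧ j = c then P r c else 0)

variable (t : ℝ)

theorem sum_drainCorner_row (i : ι) :
    ∑ j, drainCorner r c P t i j
      = ∑ j, P i j + if i = r then t * ∑ k, ∑ l, interiorBlock r c P k l - P r c else 0 := by
  by_cases hi : i = r
  · simp only [drainCorner, hi, interiorBlock_self_left, mul_zero, sub_zero, ↓reduceIte,
      sum_const_zero, ite_self, add_zero, true_and, sum_sub_distrib, sum_add_distrib, ← mul_sum,
      sum_comm (γ := κ), sum_ite_eq', mem_univ]
    ring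
  · simp [drainCorner, hi, sum_add_distrib, sum_sub_distrib, ← mul_sum]

theorem sum_drainCorner_col (j : κ) :
    ∑ i, drainCorner r c P t i j
      = ∑ i, P i j + if j = c then t * ∑ k, ∑ l, interiorBlock r c P k l - P r c else 0 := by
  by_cases hj : j = c
  · simp only [drainCorner, hj, interiorBlock_self_right, mul_zero, sub_zero, sum_const_zero,
      ite_self, add_zero, ↓reduceIte, and_true, sum_sub_distrib, sum_add_distrib, ← mul_sum,
      sum_ite_eq', mem_univ]
    ring
  · simp [drainCorner, hj, sum_add_distrib, sum_sub_distrib, ← mul_sum]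

theorem drainCorner_corner : drainCorner r c P t r c = 0 := by
  simp [drainCorner]

theorem drainCorner_self_left {j : κ} (hj : j ≠ c) :
    drainCorner r c P t r j = P r j + t * ∑ k, interiorBlock r c P k j := by
  simp [drainCorner, hj]

theorem drainCorner_self_right {i : ι} (hi : i ≠ r) :
    drainCorner r c P t i c = P i c + t * ∑ k, interiorBlock r c P i k := by
  simp [drainCorner, hi]

theorem drainCorner_of_ne {i : ι} {j : κ} (hi : i ≠ r) (hj : j ≠ c) :
    drainCorner r c P t i j = (1 - t) * P i j := by
  simp only [drainCorner, interiorBlock, hi, hj, or_self, ↓reduceIte, add_zero, and_self, sub_zero]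
  ring

variable {r c P t}

theorem drainCorner_nonneg (hP : ∀ i j, 0 ≤ P i j) (ht₀ : 0 ≤ t) (ht₁ : t ≤ 1) (i : ι) (j : κ) :
    0 ≤ drainCorner r c P t i j := by
  have hint := interiorBlock_nonneg r c P hP
  rcases eq_or_ne i r with rfl | hi <;> rcases eq_or_ne j c with rfl | hj
  · rw [drainCorner_corner]
  · rw [drainCorner_self_left _ _ _ _ hj]
    exact add_nonneg (hP i j) (mul_nonneg ht₀ (sum_nonneg fun k _ => hint k j))
  · rw [drainCorner_self_right _ _ _ _ hi]
    exact add_nonneg (hP i j) (mul_nonneg ht₀ (sum_nonneg fun k _ => hint i k))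
  · rw [drainCorner_of_ne r c P t hi hj]
    exact mul_nonneg (sub_nonneg.2 ht₁) (hP i j)

theorem drainCorner_mul_le {C : Matrix ι κ ℝ} (hC : ∀ i j, 0 ≤ C i j)
    (hCr : ∀ j, C r j = 0) (hCc : ∀ i, C i c = 0) (hP : ∀ i j, 0 ≤ P i j) (ht : 0 ≤ t)
    (i : ι) (j : κ) : drainCorner r c P t i j * C i j ≤ P i j * C i j := by
  rcases eq_or_ne i r with rfl | hi
  · simp [hCr]
  rcases eq_or_ne j c with rfl | hj
  · simp [hCc]
  rw [drainCorner_of_ne r c P t hi hj]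
  exact mul_le_mul_of_nonneg_right (by nlinarith [hP i j]) (hC i j)

theorem IsCoupling.exists_corner_eq_zero_cost_le {a : ι → ℝ} {b : κ → ℝ} {C : Matrix ι κ ℝ}
    (hP : IsCoupling a b P) (hC : ∀ i j, 0 ≤ C i j) (hCr : ∀ j, C r j = 0)
    (hCc : ∀ i, C i c = 0) (hfeas : b c ≤ ∑ i, a i - a r) :
    ∃ Q, IsCoupling a b Q ∧ Q r c = 0 ∧
      ∑ i, ∑ j, Q i j * C i j ≤ ∑ i, ∑ j, P i j * C i j := by
  set S := ∑ i, ∑ j, interiorBlock r c P i j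
  have hS : 0 ≤ S := sum_nonneg fun i _ => sum_nonneg fun j _ =>
    interiorBlock_nonneg r c P hP.1 i j
  have hcorner : 0 ≤ P r c := hP.1 r c
  have hcorner_le : P r c ≤ S := by linarith [sum_interiorBlock r c P hP]
  -- if `S = 0` then `P r c = 0` too, and `t = 0 / 0 = 0` leaves `P` unchanged
  have hbalance : P r c / S * S - P r c = 0 := by
    rw [div_mul_cancel_of_imp fun h => by linarith, sub_self]
  refine ⟨drainCorner r c P (P r c / S), ⟨?_, fun i => ?_, fun j => ?_⟩,
    drainCorner_corner r c P _, sum_le_sum fun i _ => sum_le_sum fun j _ => ?_⟩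
  · exact drainCorner_nonneg hP.1 (div_nonneg hcorner hS) (div_le_one_of_le₀ hcorner_le hS)
  · rw [sum_drainCorner_row, hbalance, ite_self, add_zero, hP.2.1]
  · rw [sum_drainCorner_col, hbalance, ite_self, add_zero, hP.2.2]
  · exact drainCorner_mul_le hC hCr hCc hP.1 (div_nonneg hcorner hS) i j

end Coupling

theorem drop_corner_constraint_min_eq_general
    (n : ℕ)
    (aaug baug : Fin (n + 1) → ℝ)
    (Caug : Matrix (Fin (n + 1)) (Fin (n + 1)) ℝ)
    (hC0 : ∀ i j, 0 ≤ Caug i j)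
    (hCrow : ∀ j, Caug (Fin.last n) j = 0)
    (hCcol : ∀ i, Caug i (Fin.last n) = 0)
    (hfeas : baug (Fin.last n) ≤ ∑ i : Fin n, aaug i.castSucc) :
    sInf ((fun P : Matrix (Fin (n + 1)) (Fin (n + 1)) ℝ =>
          ∑ i, ∑ j, P i j * Caug i j) ''
        {P | (∀ i j, 0 ≤ P i j) ∧ (∀ i, (∑ j, P i j) = aaug i) ∧
             (∀ j, (∑ i, P i j) = baug j)})
      = sInf ((fun P : Matrix (Fin (n + 1)) (Fin (n + 1)) ℝ =>
          ∑ i, ∑ j, P i j * Caug i j) ''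
        {P | (∀ i j, 0 ≤ P i j) ∧ (∀ i, (∑ j, P i j) = aaug i) ∧
             (∀ j, (∑ i, P i j) = baug j) ∧
             P (Fin.last n) (Fin.last n) = 0}) := by
  have hfeas' : baug (Fin.last n) ≤ ∑ i, aaug i - aaug (Fin.last n) := by
    rwa [Fin.sum_univ_castSucc, add_sub_cancel_right]
  refine csInf_image_eq_of_forall_exists_le (fun P hP => ⟨hP.1, hP.2.1, hP.2.2.1⟩) ⟨0, ?_⟩ ?_
  · rintro _ ⟨P, hP, rfl⟩
    exact sum_nonneg fun i _ => sum_nonneg fun j _ => mul_nonneg (hP.1 i j) (hC0 i j)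
  · intro P hP
    obtain ⟨Q, ⟨hQ₀, hQrow, hQcol⟩, hQ, hle⟩ :=
      IsCoupling.exists_corner_eq_zero_cost_le hP hC0 hCrow hCcol hfeas'
    exact ⟨Q, ⟨hQ₀, hQrow, hQcol, hQ⟩, hle⟩

theorem drop_corner_constraint_min_eq
    (n : ℕ) (hn : 1 ≤ n)
    (aaug baug : Fin (n + 1) → ℝ)
    (Caug : Matrix (Fin (n + 1)) (Fin (n + 1)) ℝ)
    (haaug : ∀ i, 0 ≤ aaug i) (hbaug : ∀ j, 0 ≤ baug j)
    (hmass : ∑ i, aaug i = ∑ j, baug j)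
    (hC0 : ∀ i j, 0 ≤ Caug i j)
    (hCrow : ∀ j, Caug (Fin.last n) j = 0)
    (hCcol : ∀ i, Caug i (Fin.last n) = 0)
    (hfeas : baug (Fin.last n) ≤ ∑ i : Fin n, aaug i.castSucc)
    (hne : {P : Matrix (Fin (n + 1)) (Fin (n + 1)) ℝ |
        (∀ i j, 0 ≤ P i j) ∧ (∀ i, (∑ j, P i j) = aaug i) ∧
        (∀ j, (∑ i, P i j) = baug j) ∧
        P (Fin.last n) (Fin.last n) = 0}.Nonempty) :
    sInf ((fun P : Matrix (Fin (n + 1)) (Fin (n + 1)) ℝ =>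
          ∑ i, ∑ j, P i j * Caug i j) ''
        {P | (∀ i j, 0 ≤ P i j) ∧ (∀ i, (∑ j, P i j) = aaug i) ∧
             (∀ j, (∑ i, P i j) = baug j)})
      = sInf ((fun P : Matrix (Fin (n + 1)) (Fin (n + 1)) ℝ =>
          ∑ i, ∑ j, P i j * Caug i j) ''
        {P | (∀ i j, 0 ≤ P i j) ∧ (∀ i, (∑ j, P i j) = aaug i) ∧
             (∀ j, (∑ i, P i j) = baug j) ∧
             P (Fin.last n) (Fin.last n) = 0}) :=
  drop_corner_constraint_min_eq_general n aaug baug Caug hC0 hCrow hCcol hfeas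
end

section
/- Let Q be a finite weighted set, ν̃ a fixed anchor, and suppose for every μ in the outermost layer Q_{K+1} and every ν ∈ D we have (1−c·ε)·𝒲(μ,ν̃) ≤ 𝒲(μ,ν) ≤ (1+c·ε)·𝒲(μ,ν̃) for a constant c depending only on z. Choose μ^max, μ^min ∈ Q_{K+1} attaining the maximum and minimum of 𝒲(·, ν̃) on Q_{K+1}, and choose nonnegative weights τ(μ^max), τ(μ^min) satisfying τ(μ^max)·𝒲(μ^max,ν̃) + τ(μ^min)·𝒲(μ^min,ν̃) = Σ_{μ∈Q_{K+1}} ω(μ)·𝒲(μ,ν̃) and τ(μ^max) + τ(μ^min) = ω(Q_{K+1}) (such weights exist by intermediate value). Then for every ν ∈ D: |τ(μ^max)𝒲(μ^max,ν) + τ(μ^min)𝒲(μ^min,ν) − Σ_{μ∈Q_{K+1}} ω(μ)𝒲(μ,ν)| ≤ 2cε · Σ_{μ∈Q_{K+1}} ω(μ)·𝒲(μ,ν̃). -/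
open Finset

theorem two_point_summary_outermost_layer
    {α P : Type*} (Qout : Finset α) (hQout : Qout.Nonempty)
    (ω : α → ℝ) (hω : ∀ μ, 0 ≤ ω μ)
    (𝒲 : α → P → ℝ) (h𝒲0 : ∀ μ ν, 0 ≤ 𝒲 μ ν)
    (D : Set P) (νtilde : P) (c ε : ℝ) (hc : 0 < c) (hε0 : 0 < ε) (hε1 : ε < 1)
    (htwosided : ∀ μ ∈ Qout, ∀ ν ∈ D,
      (1 - c * ε) * 𝒲 μ νtilde ≤ 𝒲 μ ν ∧ 𝒲 μ ν ≤ (1 + c * ε) * 𝒲 μ νtilde)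
    (μmax μmin : α) (hμmax : μmax ∈ Qout) (hμmin : μmin ∈ Qout)
    (hmax : ∀ μ ∈ Qout, 𝒲 μ νtilde ≤ 𝒲 μmax νtilde)
    (hmin : ∀ μ ∈ Qout, 𝒲 μmin νtilde ≤ 𝒲 μ νtilde)
    (τmax τmin : ℝ) (hτmax : 0 ≤ τmax) (hτmin : 0 ≤ τmin)
    (hinterp : τmax * 𝒲 μmax νtilde + τmin * 𝒲 μmin νtilde
      = ∑ μ ∈ Qout, ω μ * 𝒲 μ νtilde)
    (hsum : τmax + τmin = ∑ μ ∈ Qout, ω μ) :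
    ∀ ν ∈ D,
      |τmax * 𝒲 μmax ν + τmin * 𝒲 μmin ν - ∑ μ ∈ Qout, ω μ * 𝒲 μ ν|
        ≤ 2 * c * ε * ∑ μ ∈ Qout, ω μ * 𝒲 μ νtilde := by
  intro ν hν
  set S := ∑ μ ∈ Qout, ω μ * 𝒲 μ νtilde with hS
  have hSnn : 0 ≤ S := Finset.sum_nonneg fun μ _ => mul_nonneg (hω μ) (h𝒲0 μ νtilde)
  have hmaxb := htwosided μmax hμmax ν hν
  have hminb := htwosided μmin hμmin ν hν
  have hsumub : ∑ μ ∈ Qout, ω μ * 𝒲 μ ν ≤ (1 + c * ε) * S := by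
    rw [hS, Finset.mul_sum]
    refine Finset.sum_le_sum fun μ hμ => ?_
    have := (htwosided μ hμ ν hν).2
    nlinarith [hω μ]
  have hsumlb : (1 - c * ε) * S ≤ ∑ μ ∈ Qout, ω μ * 𝒲 μ ν := by
    rw [hS, Finset.mul_sum]
    refine Finset.sum_le_sum fun μ hμ => ?_
    have := (htwosided μ hμ ν hν).1
    nlinarith [hω μ]
  have hTub : τmax * 𝒲 μmax ν + τmin * 𝒲 μmin ν ≤ (1 + c * ε) * S := by
    have h1 : τmax * 𝒲 μmax ν ≤ τmax * ((1 + c * ε) * 𝒲 μmax νtilde) :=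
      mul_le_mul_of_nonneg_left hmaxb.2 hτmax
    have h2 : τmin * 𝒲 μmin ν ≤ τmin * ((1 + c * ε) * 𝒲 μmin νtilde) :=
      mul_le_mul_of_nonneg_left hminb.2 hτmin
    calc τmax * 𝒲 μmax ν + τmin * 𝒲 μmin ν
        ≤ τmax * ((1 + c * ε) * 𝒲 μmax νtilde) + τmin * ((1 + c * ε) * 𝒲 μmin νtilde) :=
          add_le_add h1 h2
      _ = (1 + c * ε) * (τmax * 𝒲 μmax νtilde + τmin * 𝒲 μmin νtilde) := by ring
      _ = (1 + c * ε) * S := by rw [hinterp]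
  have hTlb : (1 - c * ε) * S ≤ τmax * 𝒲 μmax ν + τmin * 𝒲 μmin ν := by
    have h1 : τmax * ((1 - c * ε) * 𝒲 μmax νtilde) ≤ τmax * 𝒲 μmax ν :=
      mul_le_mul_of_nonneg_left hmaxb.1 hτmax
    have h2 : τmin * ((1 - c * ε) * 𝒲 μmin νtilde) ≤ τmin * 𝒲 μmin ν :=
      mul_le_mul_of_nonneg_left hminb.1 hτmin
    calc (1 - c * ε) * S
        = τmax * ((1 - c * ε) * 𝒲 μmax νtilde) + τmin * ((1 - c * ε) * 𝒲 μmin νtilde) := by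
          rw [← hinterp]; ring
      _ ≤ τmax * 𝒲 μmax ν + τmin * 𝒲 μmin ν := add_le_add h1 h2
  rw [abs_le]
  constructor <;> nlinarith
end

section
/- Let ν* be an optimal solution of the robust Wasserstein barycenter problem on Q with optimal value OPT, and let Q̂ = {μ̂^l} be the optimal noiseless measure set induced by ν*, so OPT = (1/ω(Q)) Σ_l ω_l W_z^z(μ̂^l, ν*). Then for any probability measure ν, the robust barycenter cost satisfies 𝒲ℬ(Q, ν) ≤ (1/ω(Q)) Σ_l ω_l W_z^z(μ̂^l, ν). In particular, any α-approximate solution ν̂ of the (non-robust) Wasserstein barycenter problem on Q̂ is an α-approximate solution of the robust Wasserstein barycenter problem on Q. -/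
open Finset

theorem robust_barycenter_noiseless_bound
    {P : Type*} (m : ℕ) (ω : Fin m → ℝ) (hω : ∀ l, 0 ≤ ω l)
    (hW : 0 < ∑ l, ω l)
    (Wcost : P → P → ℝ) (hWcost : ∀ p q, 0 ≤ Wcost p q)
    (F : Fin m → Set P) (hF : ∀ l, (F l).Nonempty)
    (RW : Fin m → P → ℝ)
    (hRW : ∀ l ν, IsLeast {c : ℝ | ∃ p ∈ F l, c = Wcost p ν} (RW l ν))
    (νstar : P)
    (hopt : ∀ ν : P,
      (1 / ∑ l, ω l) * ∑ l, ω l * RW l νstar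
        ≤ (1 / ∑ l, ω l) * ∑ l, ω l * RW l ν)
    (μhat : Fin m → P) (hμhatF : ∀ l, μhat l ∈ F l)
    (hμhatOpt : ∀ l, Wcost (μhat l) νstar = RW l νstar) :
    (∀ ν : P,
      (1 / ∑ l, ω l) * ∑ l, ω l * RW l ν
        ≤ (1 / ∑ l, ω l) * ∑ l, ω l * Wcost (μhat l) ν) ∧
    ∀ (α : ℝ) (νhat : P), 1 ≤ α →
      (∀ ν : P, (1 / ∑ l, ω l) * ∑ l, ω l * Wcost (μhat l) νhat
          ≤ α * ((1 / ∑ l, ω l) * ∑ l, ω l * Wcost (μhat l) ν)) →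
      ∀ ν : P, (1 / ∑ l, ω l) * ∑ l, ω l * RW l νhat
          ≤ α * ((1 / ∑ l, ω l) * ∑ l, ω l * RW l ν) := by

  have key : ∀ l ν, RW l ν ≤ Wcost (μhat l) ν := fun l ν =>
    (hRW l ν).2 ⟨μhat l, hμhatF l, rfl⟩
  have havg : ∀ ν, (1 / ∑ l, ω l) * ∑ l, ω l * RW l ν
      ≤ (1 / ∑ l, ω l) * ∑ l, ω l * Wcost (μhat l) ν := by
    intro ν
    apply mul_le_mul_of_nonneg_left _ (by positivity)
    exact Finset.sum_le_sum fun l _ =>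
      mul_le_mul_of_nonneg_left (key l ν) (hω l)
  refine ⟨havg, fun α νhat hα happ ν => ?_⟩
  calc (1 / ∑ l, ω l) * ∑ l, ω l * RW l νhat
      ≤ (1 / ∑ l, ω l) * ∑ l, ω l * Wcost (μhat l) νhat := havg νhat
    _ ≤ α * ((1 / ∑ l, ω l) * ∑ l, ω l * Wcost (μhat l) νstar) := happ νstar
    _ = α * ((1 / ∑ l, ω l) * ∑ l, ω l * RW l νstar) := by
        simp only [hμhatOpt]
    _ ≤ α * ((1 / ∑ l, ω l) * ∑ l, ω l * RW l ν) :=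
        mul_le_mul_of_nonneg_left (hopt ν) (by linarith)
end
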